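/- Let $\hat\beta_j(\epsilon)$ be the $j$-th coordinate of the M-estimator as a function of $\epsilon$, with Jacobian $e_j^T(X^TDX)^{-1}X^TD$. Assume $K_0 \le \psi' \le K_1$ and $\lambda_{\min}(X^TX/n) \ge \lambda_-$. Then $\|\partial\hat\beta_j/\partial\epsilon\|_2^2 \le \frac{K_1}{nK_0\lambda_-}$; that is, the Euclidean norm of the gradient of each coordinate of the M-estimator with respect to the errors is at most $\sqrt{K_1/(nK_0\lambda_-)}$. -/
import Mathlib


open Matrix in
theorem stmt13 (n p : ℕ) (hn : 0 < n) (K₀ K₁ lam : ℝ) (h0 : 0 < K₀) (hl : 0 < lam)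
    (d : Fin n → ℝ) (hd : ∀ i, K₀ ≤ d i ∧ d i ≤ K₁)
    (X : Matrix (Fin n) (Fin p) ℝ)
    (hmin : ∀ v : Fin p → ℝ,
      lam * ∑ k, v k ^ 2 ≤ (1 / (n : ℝ)) * ∑ i, (∑ k, X i k * v k) ^ 2)
    (hinv : IsUnit (Xᵀ * Matrix.diagonal d * X).det) (j : Fin p) :
    ∑ k, (((Xᵀ * Matrix.diagonal d * X)⁻¹ * Xᵀ * Matrix.diagonal d) j k) ^ 2
      ≤ K₁ / (n * K₀ * lam) := by
  set M : Matrix (Fin p) (Fin p) ℝ := Xᵀ * Matrix.diagonal d * X with hMdef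
  have hMsymm : Mᵀ = M := by
    rw [hMdef]
    simp [Matrix.transpose_mul, Matrix.diagonal_transpose, Matrix.mul_assoc]
  have hinvsymm : (M⁻¹)ᵀ = M⁻¹ := by
    rw [Matrix.transpose_nonsing_inv, hMsymm]
  have hMul : M * M⁻¹ = 1 := Matrix.mul_nonsing_inv _ hinv
  set v : Fin p → ℝ := fun l => M⁻¹ j l with hv
  have hvsym : ∀ m, v m = M⁻¹ m j := by
    intro m
    have h := congrFun (congrFun hinvsymm j) m
    rw [Matrix.transpose_apply] at h
    exact h.symm
  set w : Fin n → ℝ := fun k => ∑ l, X k l * v l with hw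
  have hMentry : ∀ l m, M l m = ∑ k, X k l * d k * X k m := by
    intro l m
    rw [hMdef, Matrix.mul_assoc, Matrix.mul_apply]
    refine Finset.sum_congr rfl fun k _ => ?_
    rw [Matrix.transpose_apply, Matrix.diagonal_mul]
    ring
  have hentry : ∀ k, ((M⁻¹ * Xᵀ * Matrix.diagonal d) j k) = d k * w k := by
    intro k
    rw [Matrix.mul_assoc, Matrix.mul_apply]
    have hXD : ∀ l, (Xᵀ * Matrix.diagonal d) l k = X k l * d k := by
      intro l
      rw [Matrix.mul_diagonal, Matrix.transpose_apply]
    simp only [hXD, hw, hv, Finset.mul_sum]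
    exact Finset.sum_congr rfl fun l _ => by ring
  -- u m := ∑ k, X k m * (d k * w k) is the indicator of j
  have hu : ∀ m, ∑ k, X k m * (d k * w k) = if m = j then 1 else 0 := by
    intro m
    have h1 : ∑ k, X k m * (d k * w k) = ∑ l, M m l * v l := by
      simp only [hw, Finset.mul_sum]
      rw [Finset.sum_comm]
      refine Finset.sum_congr rfl fun l _ => ?_
      rw [hMentry, Finset.sum_mul]
      exact Finset.sum_congr rfl fun k _ => by ring
    have h2 := congrFun (congrFun hMul m) j
    rw [Matrix.mul_apply, Matrix.one_apply] at h2
    rw [h1]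
    calc ∑ l, M m l * v l = ∑ l, M m l * M⁻¹ l j :=
          Finset.sum_congr rfl fun l _ => by rw [hvsym]
      _ = if m = j then 1 else 0 := h2
  have hS : ∑ k, d k * w k ^ 2 = v j := by
    calc ∑ k, d k * w k ^ 2 = ∑ k, ∑ l, X k l * v l * (d k * w k) := by
          refine Finset.sum_congr rfl fun k _ => ?_
          rw [← Finset.sum_mul]
          simp only [hw]
          ring
      _ = ∑ l, v l * ∑ k, X k l * (d k * w k) := by
          rw [Finset.sum_comm]
          refine Finset.sum_congr rfl fun l _ => ?_
          rw [Finset.mul_sum]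
          exact Finset.sum_congr rfl fun k _ => by ring
      _ = v j := by simp [hu]
  have hw2nonneg : (0:ℝ) ≤ ∑ k, w k ^ 2 := Finset.sum_nonneg fun k _ => sq_nonneg _
  have hvjlow : (n : ℝ) * K₀ * lam * ∑ l, v l ^ 2 ≤ v j := by
    have h1 : K₀ * ∑ k, w k ^ 2 ≤ ∑ k, d k * w k ^ 2 := by
      rw [Finset.mul_sum]
      exact Finset.sum_le_sum fun k _ =>
        mul_le_mul_of_nonneg_right (hd k).1 (sq_nonneg _)
    have h2 := hmin v
    have hn' : (0:ℝ) < n := by exact_mod_cast hn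
    have heq : ∑ i, (∑ k, X i k * v k) ^ 2 = ∑ k, w k ^ 2 := by
      refine Finset.sum_congr rfl fun k _ => ?_
      simp only [hw]
    rw [heq] at h2
    have h3 : (n:ℝ) * (lam * ∑ l, v l ^ 2) ≤ ∑ k, w k ^ 2 := by
      have hmul := mul_le_mul_of_nonneg_left h2 (le_of_lt hn')
      have hcan : (n:ℝ) * (1 / (n:ℝ) * ∑ k, w k ^ 2) = ∑ k, w k ^ 2 := by
        field_simp
      linarith
    nlinarith [mul_le_mul_of_nonneg_left h3 (le_of_lt h0), hS]
  have hvj2 : (v j) ^ 2 ≤ ∑ l, v l ^ 2 :=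
    Finset.single_le_sum (fun l _ => sq_nonneg (v l)) (Finset.mem_univ j)
  have hc : (0:ℝ) < (n:ℝ) * K₀ * lam := by
    have hn' : (0:ℝ) < n := by exact_mod_cast hn
    positivity
  have hvjnonneg : 0 ≤ v j := le_trans (by positivity) hvjlow
  have hvjbound : v j ≤ 1 / ((n:ℝ) * K₀ * lam) := by
    have key : (n:ℝ) * K₀ * lam * (v j) ^ 2 ≤ v j :=
      le_trans (mul_le_mul_of_nonneg_left hvj2 (le_of_lt hc)) hvjlow
    rcases eq_or_lt_of_le hvjnonneg with h | h
    · rw [← h]; positivity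
    · rw [le_div_iff₀ hc]
      nlinarith
  have hK1 : (0:ℝ) < K₁ := lt_of_lt_of_le h0 (le_trans (hd ⟨0, hn⟩).1 (hd ⟨0, hn⟩).2)
  calc ∑ k, ((M⁻¹ * Xᵀ * Matrix.diagonal d) j k) ^ 2
      = ∑ k, (d k * w k) ^ 2 := Finset.sum_congr rfl fun k _ => by rw [hentry]
    _ ≤ ∑ k, K₁ * (d k * w k ^ 2) := by
        refine Finset.sum_le_sum fun k _ => ?_
        have h1 := (hd k).1
        have h2 := (hd k).2
        nlinarith [sq_nonneg (w k)]
    _ = K₁ * (v j) := by rw [← Finset.mul_sum, hS]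
    _ ≤ K₁ * (1 / ((n:ℝ) * K₀ * lam)) :=
        mul_le_mul_of_nonneg_left hvjbound (le_of_lt hK1)
    _ = K₁ / ((n:ℝ) * K₀ * lam) := by ring
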